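/- L² norm of the type I exceptional Laguerre polynomials: for k > 0, m ≥ 0, and n ≥ m, ∫_0^∞ (L^I_{k,n,m}(x))² · x^k·e^{-x}/ξ_{k-1,m}(x)² dx = (k+n)·Γ(k+n-m)/(n-m)!. -/

import Mathlib

noncomputable def lag (n : ℕ) (k : ℝ) (x : ℝ) : ℝ :=
  ∑ i ∈ Finset.range (n + 1),
    (-1 : ℝ) ^ i * (∏ j ∈ Finset.range (n - i), (k + (i : ℝ) + 1 + (j : ℝ))) /
      (Nat.factorial (n - i) : ℝ) * x ^ i / (Nat.factorial i : ℝ)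

noncomputable def xi (k : ℝ) (m : ℕ) (x : ℝ) : ℝ := lag m k (-x)

noncomputable def lagZ (j : ℤ) (k : ℝ) (x : ℝ) : ℝ :=
  if 0 ≤ j then lag j.toNat k x else 0

/-!
Write `N = n - m`, `ξ = ξ_{k-1,m}`, `θ = ξ' = L_{m-1}^k(-x)` and `L = L_N^{k-1}`. The contiguous
relation `L_j^k = L_j^{k-1} + L_{j-1}^k` and the lowering identity `x θ' + (k + x) θ = m ξ` turn
the integrand into
`(L_N^k)² x^k e^{-x} + m (L_N^{k-1})² x^{k-1} e^{-x} + (d/dx) [-θ L² x^k e^{-x} / ξ]`.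
Since `ξ ≥ ξ(0) > 0` on `[0, ∞)`, the bracket vanishes at `0` and at `∞`, so the integral is a sum
of two classical Laguerre norms, `Γ(k+N+1)/N! + m Γ(k+N)/N! = (k+n) Γ(k+N)/N!`.

The classical norms follow from `(d/dx) [x^{α+1} e^{-x} L_{j-1}^{α+1}] = j x^α e^{-x} L_j^α`:
integrating by parts gives `∫ x^t L_j^α x^α e^{-x} = 0` for `t < j` and `(-1)^j Γ(α+j+1)` for
`t = j`, and only the leading coefficient `(-1)^j / j!` of `L_j^α` survives.
-/

open MeasureTheory Real Set Filter Polynomial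
open scoped Nat Topology

lemma ascPochhammer_eval_eq_prod_range {R : Type*} [CommSemiring R] (n : ℕ) (r : R) :
    (ascPochhammer R n).eval r = ∏ j ∈ Finset.range n, (r + j) := by
  induction n with
  | zero => simp
  | succ n ih => rw [ascPochhammer_succ_eval, ih, Finset.prod_range_succ]

noncomputable def lagCoeff (n i : ℕ) (α : ℝ) : ℝ :=
  (-1) ^ i * (ascPochhammer ℝ (n - i)).eval (α + i + 1) / ((n - i)! * i !)

lemma lag_eq_sum_lagCoeff (n : ℕ) (α x : ℝ) :
    lag n α x = ∑ i ∈ Finset.range (n + 1), lagCoeff n i α * x ^ i := by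
  refine Finset.sum_congr rfl fun i _ => ?_
  rw [lagCoeff, ascPochhammer_eval_eq_prod_range, div_mul_eq_mul_div, div_mul_eq_mul_div, div_div]

lemma lagCoeff_add_left (i t : ℕ) (α : ℝ) :
    lagCoeff (i + t) i α = (-1) ^ i * (ascPochhammer ℝ t).eval (α + i + 1) / (t ! * i !) := by
  simp [lagCoeff]

lemma lagCoeff_self (n : ℕ) (α : ℝ) : lagCoeff n n α = (-1) ^ n / n ! := by
  simp [lagCoeff]

lemma lag_zero (α x : ℝ) : lag 0 α x = 1 := by
  simp [lag]

lemma lagCoeff_succ (n i : ℕ) (h : i ≤ n) (α : ℝ) :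
    lagCoeff (n + 1) i α = lagCoeff (n + 1) i (α - 1) + lagCoeff n i α := by
  obtain ⟨t, rfl⟩ := Nat.exists_eq_add_of_le h
  rw [add_assoc, lagCoeff_add_left, lagCoeff_add_left, lagCoeff_add_left,
    ascPochhammer_succ_eval, ascPochhammer_succ_left, eval_mul, eval_comp]
  simp only [eval_X, eval_add, eval_one, Nat.factorial_succ]
  push_cast
  rw [show α - 1 + i + 1 + 1 = α + i + 1 by ring]
  field_simp
  ring

lemma lag_succ (n : ℕ) (α x : ℝ) :
    lag (n + 1) α x = lag (n + 1) (α - 1) x + lag n α x := by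
  simp only [lag_eq_sum_lagCoeff, Finset.sum_range_succ _ (n + 1), lagCoeff_self]
  rw [add_right_comm, ← Finset.sum_add_distrib]
  congr 1
  refine Finset.sum_congr rfl fun i hi => ?_
  rw [lagCoeff_succ n i (Finset.mem_range_succ_iff.1 hi)]
  ring

lemma lagCoeff_zero_succ (n : ℕ) (α : ℝ) :
    ((n : ℝ) + 1) * lagCoeff (n + 1) 0 α = (n + α + 1) * lagCoeff n 0 α := by
  simp only [lagCoeff, Nat.sub_zero, ascPochhammer_succ_eval, Nat.factorial_succ]
  push_cast
  field_simp
  ring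

lemma lagCoeff_succ_succ (n i : ℕ) (h : i ≤ n) (α : ℝ) :
    ((i : ℝ) + 1) * lagCoeff (n + 1) (i + 1) α = -lagCoeff n i (α + 1) := by
  obtain ⟨t, rfl⟩ := Nat.exists_eq_add_of_le h
  rw [show i + t + 1 = (i + 1) + t by ring, lagCoeff_add_left, lagCoeff_add_left,
    Nat.factorial_succ, pow_succ]
  push_cast
  rw [show α + (i + 1) + 1 = α + 1 + i + 1 by ring]
  field_simp

lemma lagCoeff_succ_succ_of_lt (n i : ℕ) (h : i < n) (α : ℝ) :
    ((n : ℝ) + 1) * lagCoeff (n + 1) (i + 1) α + lagCoeff n i (α + 1)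
      = (n + α + 1) * lagCoeff n (i + 1) α := by
  rw [← neg_neg (lagCoeff n i (α + 1)), ← lagCoeff_succ_succ n i h.le]
  obtain ⟨t, rfl⟩ := Nat.exists_eq_add_of_le (Nat.succ_le_of_lt h)
  rw [show i + 1 + t + 1 = (i + 1) + (t + 1) by ring, lagCoeff_add_left, lagCoeff_add_left,
    ascPochhammer_succ_eval, Nat.factorial_succ]
  push_cast
  field_simp
  ring

lemma succ_mul_lag_succ (n : ℕ) (α x : ℝ) :
    ((n : ℝ) + 1) * lag (n + 1) α x = (n + α + 1) * lag n α x - x * lag n (α + 1) x := by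
  rw [eq_sub_iff_add_eq]
  calc ((n : ℝ) + 1) * lag (n + 1) α x + x * lag n (α + 1) x
      = (n + 1) * lagCoeff (n + 1) 0 α + ∑ i ∈ Finset.range (n + 1),
          ((n + 1) * (lagCoeff (n + 1) (i + 1) α * x ^ (i + 1))
            + x * (lagCoeff n i (α + 1) * x ^ i)) := by
        simp only [lag_eq_sum_lagCoeff, Finset.sum_range_succ' _ (n + 1), mul_add, Finset.mul_sum,
          Finset.sum_add_distrib, pow_zero, mul_one]
        ring
    _ = (n + 1) * lagCoeff (n + 1) 0 α + ∑ i ∈ Finset.range n,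
          (n + α + 1) * (lagCoeff n (i + 1) α * x ^ (i + 1)) := by
        have htop : (n + 1) * (lagCoeff (n + 1) (n + 1) α * x ^ (n + 1))
            + x * (lagCoeff n n (α + 1) * x ^ n) = 0 := by
          linear_combination x ^ (n + 1) * lagCoeff_succ_succ n n le_rfl α
        rw [Finset.sum_range_succ, htop, add_zero]
        refine congrArg _ (Finset.sum_congr rfl fun i hi => ?_)
        linear_combination x ^ (i + 1) * lagCoeff_succ_succ_of_lt n i (Finset.mem_range.1 hi) α
    _ = (n + α + 1) * lag n α x := by
        rw [lagCoeff_zero_succ, lag_eq_sum_lagCoeff, Finset.sum_range_succ', mul_add,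
          Finset.mul_sum]
        ring

noncomputable def lagPred : ℕ → ℝ → ℝ → ℝ
  | 0, _, _ => 0
  | m + 1, α, x => lag m α x

lemma lag_eq_add_lagPred (m : ℕ) (α x : ℝ) : lag m α x = lag m (α - 1) x + lagPred m α x := by
  cases m with
  | zero => simp [lag_zero, lagPred]
  | succ m => exact lag_succ m α x

lemma lagZ_sub_one (m : ℕ) (α x : ℝ) : lagZ ((m : ℤ) - 1) α x = lagPred m α x := by
  cases m with
  | zero => simp [lagZ, lagPred]
  | succ m => simp [lagZ, lagPred]

lemma hasDerivAt_lag (j : ℕ) (α x : ℝ) : HasDerivAt (lag j α) (-lagPred j (α + 1) x) x := by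
  cases j with
  | zero => simpa [funext (lag_zero α), lagPred] using hasDerivAt_const x (1 : ℝ)
  | succ j =>
    rw [funext (lag_eq_sum_lagCoeff (j + 1) α)]
    refine (HasDerivAt.fun_sum fun i _ =>
      (hasDerivAt_pow i x).const_mul (lagCoeff (j + 1) i α)).congr_deriv ?_
    rw [Finset.sum_range_succ', lagPred, lag_eq_sum_lagCoeff, ← Finset.sum_neg_distrib]
    simp only [Nat.cast_zero, zero_mul, mul_zero, add_zero, Nat.cast_add, Nat.cast_one,
      Nat.add_sub_cancel]
    refine Finset.sum_congr rfl fun i hi => ?_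
    linear_combination x ^ i * lagCoeff_succ_succ j i (Finset.mem_range_succ_iff.1 hi) α

lemma hasDerivAt_lagPred (m : ℕ) (α x : ℝ) :
    HasDerivAt (lagPred m α) (-lagPred (m - 1) (α + 1) x) x := by
  cases m with
  | zero =>
    have hzero : lagPred 0 α = fun _ => 0 := rfl
    simpa [hzero, lagPred] using hasDerivAt_const x (0 : ℝ)
  | succ m => exact hasDerivAt_lag m α x

lemma natCast_mul_lag (m : ℕ) (α x : ℝ) :
    m * lag m α x = (α + 1 - x) * lagPred m (α + 1) x - x * lagPred (m - 1) (α + 2) x := by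
  match m with
  | 0 => simp [lagPred]
  | 1 =>
    have hA := succ_mul_lag_succ 0 α x
    norm_num [lag_zero] at hA
    norm_num [lagPred, lag_zero, hA]
  | j + 2 =>
    have hA := succ_mul_lag_succ (j + 1) α x
    have hA' := succ_mul_lag_succ j (α + 1) x
    have hL := lag_succ j (α + 1) x
    rw [add_sub_cancel_right] at hL
    rw [show α + 1 + 1 = α + 2 by ring] at hA'
    simp only [lagPred]
    push_cast at hA ⊢
    linear_combination hA + hA' - (j + α + 2) * hL

lemma integrableOn_pow_mul_rpow_mul_exp_neg (i : ℕ) {β : ℝ} (hβ : -1 < β) :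
    IntegrableOn (fun x : ℝ => x ^ i * (x ^ β * exp (-x))) (Ioi 0) := by
  have h := integrableOn_rpow_mul_exp_neg_rpow (p := 1) (s := β + i)
    (by linarith [(Nat.cast_nonneg i : (0 : ℝ) ≤ i)]) one_pos
  refine h.congr_fun (fun x hx => ?_) measurableSet_Ioi
  dsimp only
  rw [rpow_one, rpow_add_natCast hx.ne']
  ring

lemma integrableOn_eval_mul_rpow_mul_exp_neg (P : ℝ[X]) {β : ℝ} (hβ : -1 < β) :
    IntegrableOn (fun x : ℝ => P.eval x * (x ^ β * exp (-x))) (Ioi 0) := by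
  simp_rw [eval_eq_sum_range, Finset.sum_mul, mul_assoc]
  exact integrable_finsetSum _ fun i _ =>
    (integrableOn_pow_mul_rpow_mul_exp_neg i hβ).const_mul _

lemma tendsto_pow_mul_rpow_mul_exp_neg (i : ℕ) (β : ℝ) :
    Tendsto (fun x : ℝ => x ^ i * (x ^ β * exp (-x))) atTop (𝓝 0) := by
  have h := tendsto_rpow_mul_exp_neg_mul_atTop_nhds_zero (β + i) 1 one_pos
  refine h.congr' ?_
  filter_upwards [eventually_gt_atTop 0] with x hx
  rw [neg_one_mul, rpow_add_natCast hx.ne']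
  ring

lemma tendsto_eval_mul_rpow_mul_exp_neg (P : ℝ[X]) (β : ℝ) :
    Tendsto (fun x : ℝ => P.eval x * (x ^ β * exp (-x))) atTop (𝓝 0) := by
  simp_rw [eval_eq_sum_range, Finset.sum_mul, mul_assoc]
  simpa using tendsto_finsetSum _ fun i _ =>
    (tendsto_pow_mul_rpow_mul_exp_neg i β).const_mul (P.coeff i)

lemma integral_rpow_mul_exp_neg {β : ℝ} (hβ : -1 < β) :
    ∫ x in Ioi (0 : ℝ), x ^ β * exp (-x) = Gamma (β + 1) := by
  simpa using integral_rpow_mul_exp_neg_rpow one_pos hβ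

noncomputable def lagPoly (n : ℕ) (α : ℝ) : ℝ[X] :=
  ∑ i ∈ Finset.range (n + 1), C (lagCoeff n i α) * X ^ i

@[simp]
lemma eval_lagPoly (n : ℕ) (α x : ℝ) : (lagPoly n α).eval x = lag n α x := by
  simp [lagPoly, lag_eq_sum_lagCoeff, eval_finsetSum]

noncomputable def lagPredPoly : ℕ → ℝ → ℝ[X]
  | 0, _ => 0
  | m + 1, α => lagPoly m α

@[simp]
lemma eval_lagPredPoly (m : ℕ) (α x : ℝ) : (lagPredPoly m α).eval x = lagPred m α x := by
  cases m <;> simp [lagPredPoly, lagPred]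

lemma continuous_lag (n : ℕ) (α : ℝ) : Continuous (lag n α) := by
  simpa using (lagPoly n α).continuous

lemma continuous_lagPred (m : ℕ) (α : ℝ) : Continuous (lagPred m α) := by
  simpa using (lagPredPoly m α).continuous

lemma integrableOn_pow_mul_lag_mul_rpow_mul_exp_neg (t j : ℕ) (γ : ℝ) {β : ℝ} (hβ : -1 < β) :
    IntegrableOn (fun x : ℝ => x ^ t * lag j γ x * (x ^ β * exp (-x))) (Ioi 0) := by
  refine (integrableOn_eval_mul_rpow_mul_exp_neg (X ^ t * lagPoly j γ) hβ).congr_fun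
    (fun x _ => ?_) measurableSet_Ioi
  simp

lemma hasDerivAt_rpow_mul_exp_neg_mul_lagPred (m : ℕ) (α : ℝ) {x : ℝ} (hx : 0 < x) :
    HasDerivAt (fun y => y ^ (α + 1) * exp (-y) * lagPred m (α + 1) y)
      (m * (x ^ α * exp (-x) * lag m α x)) x := by
  have hpow : HasDerivAt (fun y : ℝ => y ^ (α + 1)) ((α + 1) * x ^ α) x := by
    simpa using hasDerivAt_rpow_const (x := x) (p := α + 1) (Or.inl hx.ne')
  have hexp : HasDerivAt (fun y : ℝ => exp (-y)) (-exp (-x)) x := by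
    simpa using (hasDerivAt_neg x).exp
  refine ((hpow.fun_mul hexp).fun_mul (hasDerivAt_lagPred m (α + 1) x)).congr_deriv ?_
  rw [rpow_add_one hx.ne', show α + 1 + 1 = α + 2 by ring]
  linear_combination (-(x ^ α * exp (-x))) * natCast_mul_lag m α x

lemma integral_pow_mul_lag_succ (t j : ℕ) {α : ℝ} (hα : -1 < α) :
    (j + 1) * ∫ x in Ioi 0, x ^ t * lag (j + 1) α x * (x ^ α * exp (-x))
      = -t * ∫ x in Ioi 0, x ^ (t - 1) * lag j (α + 1) x * (x ^ (α + 1) * exp (-x)) := by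
  have hα1 : 0 < α + 1 := by linarith
  set f : ℝ → ℝ := fun y => y ^ t * (y ^ (α + 1) * exp (-y) * lagPred (j + 1) (α + 1) y)
  have hderiv : ∀ x ∈ Ioi (0 : ℝ), HasDerivAt f
      (t * (x ^ (t - 1) * lag j (α + 1) x * (x ^ (α + 1) * exp (-x)))
        + (j + 1) * (x ^ t * lag (j + 1) α x * (x ^ α * exp (-x)))) x := fun x hx => by
    refine ((hasDerivAt_pow t x).mul
      (hasDerivAt_rpow_mul_exp_neg_mul_lagPred (j + 1) α hx)).congr_deriv ?_
    simp only [lagPred]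
    push_cast
    ring
  have hcont : ContinuousWithinAt f (Ici 0) 0 := by
    have hrpow : ContinuousAt (fun y : ℝ => y ^ (α + 1)) 0 :=
      continuousAt_rpow_const 0 _ (Or.inr hα1.le)
    exact ((continuous_pow t).continuousAt.mul ((hrpow.mul (continuous_exp.comp
      continuous_neg).continuousAt).mul (continuous_lagPred _ _).continuousAt)).continuousWithinAt
  have htendsto : Tendsto f atTop (𝓝 0) := by
    refine (tendsto_eval_mul_rpow_mul_exp_neg (X ^ t * lagPoly j (α + 1)) (α + 1)).congr
      fun y => ?_
    simp only [f, lagPred, eval_mul, eval_pow, eval_X, eval_lagPoly]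
    ring
  have hint_left := (integrableOn_pow_mul_lag_mul_rpow_mul_exp_neg (t - 1) j (α + 1)
    (by linarith : -1 < α + 1)).const_mul (t : ℝ)
  have hint_right :=
    (integrableOn_pow_mul_lag_mul_rpow_mul_exp_neg t (j + 1) α hα).const_mul ((j : ℝ) + 1)
  have hftc := integral_Ioi_of_hasDerivAt_of_tendsto hcont hderiv (hint_left.add hint_right)
    htendsto
  rw [integral_add hint_left hint_right, integral_const_mul, integral_const_mul] at hftc
  have hf0 : f 0 = 0 := by simp [f, zero_rpow hα1.ne']
  linear_combination hftc - hf0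

lemma integral_pow_mul_lag_of_lt {t j : ℕ} (h : t < j) {α : ℝ} (hα : -1 < α) :
    ∫ x in Ioi 0, x ^ t * lag j α x * (x ^ α * exp (-x)) = 0 := by
  induction j generalizing t α with
  | zero => omega
  | succ j ih =>
    have hibp := integral_pow_mul_lag_succ t j hα
    have hrhs : (t : ℝ) * ∫ x in Ioi 0, x ^ (t - 1) * lag j (α + 1) x * (x ^ (α + 1) * exp (-x))
        = 0 := by
      rcases t with _ | s
      · simp
      · rw [ih (by omega) (by linarith), mul_zero]
    have hj : (j : ℝ) + 1 ≠ 0 := by positivity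
    exact (mul_eq_zero.1 (by linear_combination hibp - hrhs)).resolve_left hj

lemma integral_pow_mul_lag_self (j : ℕ) {α : ℝ} (hα : -1 < α) :
    ∫ x in Ioi 0, x ^ j * lag j α x * (x ^ α * exp (-x)) = (-1) ^ j * Gamma (α + j + 1) := by
  induction j generalizing α with
  | zero => simpa [lag_zero] using integral_rpow_mul_exp_neg hα
  | succ j ih =>
    have hibp := integral_pow_mul_lag_succ (j + 1) j hα
    rw [Nat.add_sub_cancel, ih (by linarith)] at hibp
    have hj : (j : ℝ) + 1 ≠ 0 := by positivity
    apply mul_left_cancel₀ hj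
    push_cast at hibp ⊢
    rw [hibp, show α + 1 + j + 1 = α + (j + 1) + 1 by ring]
    ring

lemma integrableOn_lag_sq_mul_rpow_mul_exp_neg (j : ℕ) {α : ℝ} (hα : -1 < α) :
    IntegrableOn (fun x => lag j α x ^ 2 * (x ^ α * exp (-x))) (Ioi 0) :=
  (integrableOn_eval_mul_rpow_mul_exp_neg (lagPoly j α ^ 2) hα).congr_fun
    (fun x _ => by simp) measurableSet_Ioi

lemma integral_lag_sq (j : ℕ) {α : ℝ} (hα : -1 < α) :
    ∫ x in Ioi 0, lag j α x ^ 2 * (x ^ α * exp (-x)) = Gamma (α + j + 1) / j ! := by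
  have hexpand : ∀ x, lag j α x ^ 2 * (x ^ α * exp (-x))
      = ∑ i ∈ Finset.range (j + 1), lagCoeff j i α * (x ^ i * lag j α x * (x ^ α * exp (-x))) := by
    intro x
    rw [sq, mul_assoc, lag_eq_sum_lagCoeff j α x, Finset.sum_mul]
    refine Finset.sum_congr rfl fun i _ => ?_
    rw [← lag_eq_sum_lagCoeff]
    ring
  simp_rw [hexpand]
  rw [integral_finsetSum _ fun i _ =>
      (integrableOn_pow_mul_lag_mul_rpow_mul_exp_neg i j α hα).const_mul _,
    Finset.sum_range_succ, Finset.sum_eq_zero fun i hi => by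
      rw [integral_const_mul, integral_pow_mul_lag_of_lt (Finset.mem_range.1 hi) hα, mul_zero],
    zero_add, integral_const_mul, integral_pow_mul_lag_self j hα, lagCoeff_self]
  field_simp
  rw [← pow_mul, mul_comm j 2, pow_mul, neg_one_sq, one_pow, one_mul]

lemma lagCoeff_mul_pow_eq_mul_neg_pow (m i : ℕ) (α x : ℝ) : lagCoeff m i α * x ^ i
    = (ascPochhammer ℝ (m - i)).eval (α + i + 1) / ((m - i)! * i !) * (-x) ^ i := by
  rw [lagCoeff, neg_pow]
  ring

lemma lag_apply_zero (m : ℕ) (α : ℝ) : lag m α 0 = (ascPochhammer ℝ m).eval (α + 1) / m ! := by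
  simp [lag_eq_sum_lagCoeff, Finset.sum_range_succ', lagCoeff]

lemma lag_apply_zero_pos (m : ℕ) {α : ℝ} (hα : -1 < α) : 0 < lag m α 0 := by
  rw [lag_apply_zero]
  exact div_pos (ascPochhammer_pos m _ (by linarith)) (by positivity)

lemma lag_apply_zero_le_of_nonpos (m : ℕ) {α : ℝ} (hα : -1 < α) {x : ℝ} (hx : x ≤ 0) :
    lag m α 0 ≤ lag m α x := by
  have hterm : ∀ i ∈ Finset.range (m + 1), 0 ≤ lagCoeff m i α * x ^ i := fun i _ => by
    rw [lagCoeff_mul_pow_eq_mul_neg_pow]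
    have hP := ascPochhammer_pos (m - i) (α + i + 1)
      (by linarith [(Nat.cast_nonneg i : (0 : ℝ) ≤ i)])
    exact mul_nonneg (div_nonneg hP.le (by positivity)) (pow_nonneg (by linarith) i)
  calc lag m α 0 = lagCoeff m 0 α * x ^ 0 := by
        simp [lag_eq_sum_lagCoeff, Finset.sum_range_succ']
    _ ≤ lag m α x := by
        rw [lag_eq_sum_lagCoeff]
        exact Finset.single_le_sum hterm (by simp)

lemma lag_apply_zero_le_xi (m : ℕ) {α : ℝ} (hα : -1 < α) {x : ℝ} (hx : 0 ≤ x) :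
    lag m α 0 ≤ xi α m x :=
  lag_apply_zero_le_of_nonpos m hα (neg_nonpos.2 hx)

lemma xi_pos (m : ℕ) {α : ℝ} (hα : -1 < α) {x : ℝ} (hx : 0 ≤ x) : 0 < xi α m x :=
  (lag_apply_zero_pos m hα).trans_le (lag_apply_zero_le_xi m hα hx)

lemma norm_inv_xi_le (m : ℕ) {α : ℝ} (hα : -1 < α) {x : ℝ} (hx : 0 ≤ x) :
    ‖(xi α m x)⁻¹‖ ≤ (lag m α 0)⁻¹ := by
  rw [norm_inv, Real.norm_of_nonneg (xi_pos m hα hx).le]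
  exact inv_anti₀ (lag_apply_zero_pos m hα) (lag_apply_zero_le_xi m hα hx)

lemma hasDerivAt_xi (α : ℝ) (m : ℕ) (x : ℝ) :
    HasDerivAt (xi α m) (lagPred m (α + 1) (-x)) x := by
  rw [show xi α m = lag m α ∘ Neg.neg from rfl]
  simpa using (hasDerivAt_lag m α (-x)).comp x (hasDerivAt_neg x)

/-- `xLagI k m N` is the exceptional Laguerre polynomial `L^I_{k, N + m, m}`. -/
noncomputable def xLagI (k : ℝ) (m N : ℕ) (x : ℝ) : ℝ :=
  xi k m x * lag N (k - 1) x + xi (k - 1) m x * lagPred N k x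

lemma hasDerivAt_xLagI_primitive {k : ℝ} (hk : 0 < k) (m N : ℕ) {x : ℝ} (hx : 0 < x) :
    HasDerivAt
      (fun y => -lagPred m k (-y) * lag N (k - 1) y ^ 2 * y ^ k * exp (-y) / xi (k - 1) m y)
      (xLagI k m N x ^ 2 * (x ^ k * exp (-x) / xi (k - 1) m x ^ 2)
        - lag N k x ^ 2 * (x ^ k * exp (-x))
        - m * (lag N (k - 1) x ^ 2 * (x ^ (k - 1) * exp (-x)))) x := by
  have hξ := (xi_pos m (α := k - 1) (by linarith) hx.le).ne'
  have hθ : HasDerivAt (fun y => -lagPred m k (-y)) (-lagPred (m - 1) (k + 1) (-x)) x :=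
    ((hasDerivAt_lagPred m k (-x)).comp x (hasDerivAt_neg x)).neg.congr_deriv (by ring)
  have hL := hasDerivAt_lag N (k - 1) x
  have hpow : HasDerivAt (fun y : ℝ => y ^ k) (k * x ^ (k - 1)) x :=
    hasDerivAt_rpow_const (Or.inl hx.ne')
  have hexp : HasDerivAt (fun y : ℝ => exp (-y)) (-exp (-x)) x := by
    simpa using (hasDerivAt_neg x).exp
  -- the lowering identity `x θ' + (k + x) θ = m ξ`
  have hlower := natCast_mul_lag m (k - 1) (-x)
  have hsplit_m := lag_eq_add_lagPred m k (-x)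
  have hsplit_N := lag_eq_add_lagPred N k x
  have hxk : x ^ k = x ^ (k - 1) * x := by rw [← rpow_add_one hx.ne', sub_add_cancel]
  rw [sub_add_cancel] at hL
  rw [sub_add_cancel, show k - 1 + 2 = k + 1 by ring] at hlower
  refine ((((hθ.fun_mul (hL.fun_pow 2)).fun_mul hpow).fun_mul hexp).fun_div
    (hasDerivAt_xi (k - 1) m x) hξ).congr_deriv ?_
  simp only [xLagI, xi, sub_add_cancel] at hξ ⊢
  rw [hsplit_m, hsplit_N, hxk]
  field_simp
  linear_combination (lag N (k - 1) x ^ 2 * lag m (k - 1) (-x)) * hlower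

lemma integrableOn_xLagI_sq_mul_weight {k : ℝ} (hk : 0 < k) (m N : ℕ) :
    IntegrableOn (fun x => xLagI k m N x ^ 2 * (x ^ k * exp (-x) / xi (k - 1) m x ^ 2)) (Ioi 0) := by
  let P : ℝ[X] := (lagPoly m k).comp (-X) * lagPoly N (k - 1)
    + (lagPoly m (k - 1)).comp (-X) * lagPredPoly N k
  have hP : ∀ x, P.eval x = xLagI k m N x := fun x => by simp [P, xLagI, xi, eval_comp]
  have hint := integrableOn_eval_mul_rpow_mul_exp_neg (P ^ 2) (β := k) (by linarith)
  have hmeas : AEStronglyMeasurable (fun x => (xi (k - 1) m x)⁻¹ ^ 2) (volume.restrict (Ioi 0)) :=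
    (((continuous_lag m (k - 1)).comp continuous_neg).measurable.inv.pow_const 2).aestronglyMeasurable
  have hbound : ∀ᵐ x ∂(volume.restrict (Ioi (0 : ℝ))),
      ‖(xi (k - 1) m x)⁻¹ ^ 2‖ ≤ (lag m (k - 1) 0)⁻¹ ^ 2 := by
    rw [ae_restrict_iff' measurableSet_Ioi]
    refine ae_of_all _ fun x hx => ?_
    rw [norm_pow]
    exact pow_le_pow_left₀ (norm_nonneg _) (norm_inv_xi_le m (by linarith) (le_of_lt hx)) 2
  refine IntegrableOn.congr_fun (hint.mul_bdd hmeas hbound) (fun x _ => ?_) measurableSet_Ioi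
  simp only [eval_pow, hP]
  ring

lemma integral_xLagI_sq_mul_weight {k : ℝ} (hk : 0 < k) (m N : ℕ) :
    ∫ x in Ioi 0, xLagI k m N x ^ 2 * (x ^ k * exp (-x) / xi (k - 1) m x ^ 2)
      = (k + N + m) * Gamma (k + N) / N ! := by
  set F : ℝ → ℝ :=
    fun y => -lagPred m k (-y) * lag N (k - 1) y ^ 2 * y ^ k * exp (-y) / xi (k - 1) m y
  have hcont : ContinuousWithinAt F (Ici 0) 0 := by
    have hrpow : ContinuousAt (fun y : ℝ => y ^ k) 0 := continuousAt_rpow_const 0 k (Or.inr hk.le)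
    refine ContinuousAt.continuousWithinAt (ContinuousAt.div ?_
      ((continuous_lag m (k - 1)).comp continuous_neg).continuousAt
      (xi_pos m (α := k - 1) (by linarith) le_rfl).ne')
    exact (((((continuous_lagPred m k).comp continuous_neg).neg.mul
      ((continuous_lag N (k - 1)).pow 2)).continuousAt.mul hrpow).mul
      (continuous_exp.comp continuous_neg).continuousAt)
  have hF0 : F 0 = 0 := by simp [F, zero_rpow hk.ne']
  have htendsto : Tendsto F atTop (𝓝 0) := by
    let P : ℝ[X] := -(lagPredPoly m k).comp (-X) * lagPoly N (k - 1) ^ 2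
    have hbdd : IsBoundedUnder (· ≤ ·) atTop (norm ∘ fun y => (xi (k - 1) m y)⁻¹) :=
      isBoundedUnder_of_eventually_le (eventually_ge_atTop 0 |>.mono
        fun y hy => norm_inv_xi_le m (by linarith) hy)
    refine ((tendsto_eval_mul_rpow_mul_exp_neg P k).zero_mul_isBoundedUnder_le hbdd).congr
      fun y => ?_
    simp only [F, P, eval_mul, eval_neg, eval_comp, eval_pow, eval_X, eval_lagPoly,
      eval_lagPredPoly]
    ring
  have hT1 := integrableOn_lag_sq_mul_rpow_mul_exp_neg N (α := k) (by linarith)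
  have hT2 := (integrableOn_lag_sq_mul_rpow_mul_exp_neg N (α := k - 1) (by linarith)).const_mul
    (m : ℝ)
  have hI := integrableOn_xLagI_sq_mul_weight hk m N
  have hftc := integral_Ioi_of_hasDerivAt_of_tendsto hcont
    (fun x hx => hasDerivAt_xLagI_primitive hk m N hx) ((hI.sub' hT1).sub' hT2) htendsto
  rw [integral_sub (hI.sub' hT1) hT2, integral_sub hI hT1, integral_const_mul,
    integral_lag_sq N (by linarith), integral_lag_sq N (by linarith), hF0,
    show k - 1 + N + 1 = k + N by ring, Gamma_add_one (by positivity)] at hftc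
  linear_combination hftc

/-- L² norm of the type I exceptional Laguerre polynomials. -/
theorem XLaguerreI_norm (k : ℝ) (hk : 0 < k) (m n : ℕ) (hnm : m ≤ n) :
    ∫ x in Set.Ioi (0 : ℝ),
      (xi k m x * lag (n - m) (k - 1) x +
        xi (k - 1) m x * lagZ ((n : ℤ) - (m : ℤ) - 1) k x) ^ 2 *
        (Real.rpow x k * Real.exp (-x) / (xi (k - 1) m x) ^ 2)
      = (k + (n : ℝ)) * Real.Gamma (k + (n : ℝ) - (m : ℝ)) / (Nat.factorial (n - m) : ℝ) := by
  have hindex : (n : ℤ) - (m : ℤ) - 1 = ((n - m : ℕ) : ℤ) - 1 := by omega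
  simp_rw [hindex, lagZ_sub_one]
  refine (integral_xLagI_sq_mul_weight hk m (n - m)).trans ?_
  rw [Nat.cast_sub hnm]
  ring_nf
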